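/- Let n ≥ 1 and let S be a nonempty subset of 𝔽_2^{2n} \ {0}. Define the real matrix W with rows indexed by a ∈ S and columns indexed by b ∈ 𝔽_2^{2n}, with entries W_{a,b} = (−1)^{⟨a,b⟩}. Then for every M ∈ ℝ^S there exists λ : 𝔽_2^{2n} → ℝ with λ_b ≥ 0 for all b and Σ_{b ∈ 𝔽_2^{2n}} W_{a,b} λ_b = M_a for every a ∈ S. -/

import Mathlib

/-- Binary symplectic vectors: `𝔽_2^{2n}` presented as pairs `(a_x, a_z)` of
vectors in `𝔽_2^n`. -/
abbrev BV (n : ℕ) := (Fin n → ZMod 2) × (Fin n → ZMod 2)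

/-- The binary symplectic form `⟨a,b⟩ = a_x · b_z + a_z · b_x` (mod 2). -/
def symp {n : ℕ} (a b : BV n) : ZMod 2 :=
  (∑ i, a.1 i * b.2 i) + (∑ i, a.2 i * b.1 i)

/-- The real sign `(−1)^{⟨a,b⟩} ∈ {−1, 1} ⊆ ℝ`. -/
noncomputable def wsgn {n : ℕ} (a b : BV n) : ℝ := (-1 : ℝ) ^ (symp a b).val

lemma neg_one_pow_add_val (x y : ZMod 2) :
    ((-1:ℝ)) ^ (x+y).val = (-1:ℝ)^x.val * (-1:ℝ)^y.val := by
  rcases (by decide : ∀ z : ZMod 2, z = 0 ∨ z = 1) x with rfl | rfl <;>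
  rcases (by decide : ∀ z : ZMod 2, z = 0 ∨ z = 1) y with rfl | rfl <;>
    simp [show ((1:ZMod 2)+1).val = 0 from rfl, show ((0:ZMod 2)).val = 0 from rfl,
      show ((1:ZMod 2)).val = 1 from rfl]

lemma neg_bv {n : ℕ} (a : BV n) : -a = a := by
  have h : ∀ x : ZMod 2, -x = x := by decide
  ext i <;> simp [Prod.ext_iff, h]

lemma add_self_bv {n : ℕ} (a : BV n) : a + a = 0 := by
  have h : ∀ x : ZMod 2, x + x = 0 := by decide
  ext i <;> simp [Prod.ext_iff, h]

lemma symp_add_right {n : ℕ} (c b b0 : BV n) :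
    symp c (b + b0) = symp c b + symp c b0 := by
  simp only [symp, Prod.fst_add, Prod.snd_add, Pi.add_apply, mul_add,
    Finset.sum_add_distrib]
  ring

lemma symp_add_left {n : ℕ} (a a' b : BV n) :
    symp (a + a') b = symp a b + symp a' b := by
  simp only [symp, Prod.fst_add, Prod.snd_add, Pi.add_apply, add_mul,
    Finset.sum_add_distrib]
  ring

lemma wsgn_mul {n : ℕ} (a a' b : BV n) :
    wsgn a b * wsgn a' b = wsgn (a + a') b := by
  rw [wsgn, wsgn, wsgn, symp_add_left, neg_one_pow_add_val]

lemma wsgn_pm {n : ℕ} (a b : BV n) : wsgn a b = 1 ∨ wsgn a b = -1 := by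
  rcases Nat.even_or_odd (symp a b).val with h | h
  · exact Or.inl (h.neg_one_pow)
  · exact Or.inr (h.neg_one_pow)

lemma exists_b0 {n : ℕ} (c : BV n) (hc : c ≠ 0) : ∃ b0 : BV n, symp c b0 = 1 := by
  have h1 : ∀ x : ZMod 2, x ≠ 0 → x = 1 := by decide
  by_cases h : c.1 = 0
  · have h2 : c.2 ≠ 0 := by
      intro h2; exact hc (Prod.ext h h2)
    obtain ⟨i, hi⟩ := Function.ne_iff.mp h2
    refine ⟨(fun j => if j = i then 1 else 0, 0), ?_⟩
    simp [symp, mul_ite, Finset.sum_ite_eq', h1 _ hi]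
  · obtain ⟨i, hi⟩ := Function.ne_iff.mp h
    refine ⟨(0, fun j => if j = i then 1 else 0), ?_⟩
    simp [symp, mul_ite, Finset.sum_ite_eq', h1 _ hi]

lemma sum_wsgn {n : ℕ} (c : BV n) (hc : c ≠ 0) : ∑ b : BV n, wsgn c b = 0 := by
  obtain ⟨b0, hb0⟩ := exists_b0 c hc
  have key : ∀ b : BV n, wsgn c (b + b0) = - wsgn c b := by
    intro b
    rw [wsgn, wsgn, symp_add_right, hb0, neg_one_pow_add_val]
    simp [show ((1:ZMod 2)).val = 1 from rfl]
  have h2 : ∑ b : BV n, wsgn c (b + b0) = ∑ b : BV n, wsgn c b :=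
    Fintype.sum_equiv (Equiv.addRight b0) _ _ (fun b => rfl)
  simp only [key, Finset.sum_neg_distrib] at h2
  linarith

lemma sum_wsgn_zero {n : ℕ} : ∑ b : BV n, wsgn (0 : BV n) b = (Fintype.card (BV n) : ℝ) := by
  have : ∀ b : BV n, wsgn (0 : BV n) b = 1 := by
    intro b
    simp [wsgn, symp, show ((0:ZMod 2)).val = 0 from rfl]
  simp [this]

lemma orth {n : ℕ} (a a' : BV n) :
    ∑ b : BV n, wsgn a b * wsgn a' b =
      if a = a' then (Fintype.card (BV n) : ℝ) else 0 := by
  simp_rw [wsgn_mul]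
  split
  · next h => rw [h, add_self_bv, sum_wsgn_zero]
  · next h =>
    apply sum_wsgn
    intro hz
    apply h
    have := congrArg (· + a') hz
    simp only [add_assoc, add_self_bv, add_zero, zero_add] at this
    exact this


theorem stmt_1 (n : ℕ) (hn : 1 ≤ n) (S : Finset (BV n)) (hS : S.Nonempty)
    (h0 : (0 : BV n) ∉ S) (M : BV n → ℝ) :
    ∃ lam : BV n → ℝ, (∀ b, 0 ≤ lam b) ∧
      ∀ a ∈ S, ∑ b : BV n, wsgn a b * lam b = M a := by
  set C : ℝ := (Fintype.card (BV n) : ℝ) with hCdef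
  have hC : 0 < C := by positivity
  refine ⟨fun b => ∑ a' ∈ S, (|M a'| + M a' * wsgn a' b) / C, ?_, ?_⟩
  · intro b
    apply Finset.sum_nonneg
    intro a' _
    apply div_nonneg _ hC.le
    rcases wsgn_pm a' b with h | h <;> rw [h]
    · nlinarith [le_abs_self (M a'), neg_abs_le (M a')]
    · nlinarith [le_abs_self (M a'), neg_abs_le (M a')]
  · intro a ha
    have key : ∀ a' ∈ S,
        ∑ b : BV n, wsgn a b * ((|M a'| + M a' * wsgn a' b) / C)
          = if a = a' then M a' else 0 := by
      intro a' _
      have expand : ∀ b : BV n, wsgn a b * ((|M a'| + M a' * wsgn a' b) / C)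
          = (|M a'| * wsgn a b + M a' * (wsgn a b * wsgn a' b)) / C := by
        intro b; ring
      simp_rw [expand]
      rw [← Finset.sum_div]
      rw [show (∑ b : BV n, (|M a'| * wsgn a b + M a' * (wsgn a b * wsgn a' b)))
          = |M a'| * (∑ b : BV n, wsgn a b) + M a' * (∑ b : BV n, wsgn a b * wsgn a' b) by
        rw [Finset.mul_sum, Finset.mul_sum, Finset.sum_add_distrib]]
      have ha0 : a ≠ 0 := fun h => h0 (h ▸ ha)
      rw [sum_wsgn a ha0, orth, mul_zero, zero_add]
      split
      · rw [← hCdef]; field_simp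
      · simp
    calc ∑ b : BV n, wsgn a b * ∑ a' ∈ S, (|M a'| + M a' * wsgn a' b) / C
        = ∑ b : BV n, ∑ a' ∈ S, wsgn a b * ((|M a'| + M a' * wsgn a' b) / C) := by
          simp_rw [Finset.mul_sum]
      _ = ∑ a' ∈ S, ∑ b : BV n, wsgn a b * ((|M a'| + M a' * wsgn a' b) / C) :=
          Finset.sum_comm
      _ = ∑ a' ∈ S, if a = a' then M a' else 0 := Finset.sum_congr rfl key
      _ = M a := by rw [Finset.sum_ite_eq, if_pos ha]
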